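/- For every integer n ≥ 0, the q-Bernoulli numbers of the second kind satisfy ∑_{k=0}^{n} q^{k-1} b_k(q) b_{n-k}(q) = -[n-1]_q · b_n(q) - [n-2]_q · b_{n-1}(q), as an identity in the field of rational functions in q, where by convention b_m(q) = 0 for m < 0. -/

import Mathlib

/-- The `q`-integer `[n]_q = (1 - q^n)/(1 - q)` for an arbitrary integer `n`,
as an element of the field `ℚ(q)` of rational functions. -/
noncomputable def qInt (n : ℤ) : RatFunc ℚ :=
  (1 - (RatFunc.X : RatFunc ℚ) ^ n) / (1 - RatFunc.X)

/-- The `q`-analogue of the Bernoulli numbers of the second kind: `b_0(q) = 1`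
and for `n ≥ 1`, `b_n(q) = -∑_{k=1}^{n} (-1)^k b_{n-k}(q)/[k+1]_q`. -/
noncomputable def qBernoulliSnd : ℕ → RatFunc ℚ
  | 0 => 1
  | n + 1 =>
      -∑ k ∈ Finset.range (n + 1),
        (-1 : RatFunc ℚ) ^ (k + 1) * qBernoulliSnd (n - k) / qInt ((k : ℤ) + 2)
  decreasing_by exact Nat.lt_succ_of_le (Nat.sub_le n k)

/-- Extension to integer indices, with `b_m(q) = 0` for `m < 0`. -/
noncomputable def qBernoulliSndInt (m : ℤ) : RatFunc ℚ :=
  if m < 0 then 0 else qBernoulliSnd m.toNat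

/-!
Let `B(t) = ∑ b_n(q) tⁿ` and `L(t) = log_q(1 + t)`, so that `B·L = t`, and let `D_q` be the Jackson
`q`-derivative, for which `(1 + t)·D_q L = 1` and `D_q(f·g) = f(qt)·D_q g + D_q f·g`. Applying
`D_q` to `B·L = t` and multiplying by `(1 + t)·B` gives `B(qt)·B(t) = (1 + t)·(B - t·D_q B)`.
Since `1 - [n]_q = -q·[n - 1]_q`, the coefficient of `tⁿ` in this identity, divided by `q`, is the
claimed convolution formula.
-/

open PowerSeries Finset

theorem geom_sum_add {R : Type*} [Semiring R] (x : R) (a b : ℕ) :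
    ∑ i ∈ range (a + b), x ^ i = ∑ i ∈ range a, x ^ i + x ^ a * ∑ i ∈ range b, x ^ i := by
  simp only [sum_range_add, pow_add, mul_sum]

namespace PowerSeries

variable {R : Type*} [CommSemiring R] (q : R)

/-- The Jackson `q`-derivative; `[n + 1]_q` is written as a geometric sum so that it makes sense
over any semiring. -/
noncomputable def qDeriv (f : R⟦X⟧) : R⟦X⟧ :=
  mk fun n => (∑ i ∈ range (n + 1), q ^ i) * coeff (n + 1) f

theorem coeff_qDeriv (f : R⟦X⟧) (n : ℕ) :
    coeff n (qDeriv q f) = (∑ i ∈ range (n + 1), q ^ i) * coeff (n + 1) f :=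
  coeff_mk _ _

theorem qDeriv_X : qDeriv q (X : R⟦X⟧) = 1 := by
  ext (_ | n) <;> simp [coeff_qDeriv, coeff_X, coeff_one]

theorem coeff_X_mul_qDeriv (f : R⟦X⟧) (n : ℕ) :
    coeff n (X * qDeriv q f) = (∑ i ∈ range n, q ^ i) * coeff n f := by
  cases n with
  | zero => simp
  | succ n => rw [coeff_succ_X_mul, coeff_qDeriv]

theorem qDeriv_mul (f g : R⟦X⟧) :
    qDeriv q (f * g) = rescale q f * qDeriv q g + qDeriv q f * g := by
  ext n
  have split : ∀ p ∈ antidiagonal (n + 1),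
      (∑ i ∈ range (n + 1), q ^ i) * (coeff p.1 f * coeff p.2 g) =
        q ^ p.1 * coeff p.1 f * ((∑ i ∈ range p.2, q ^ i) * coeff p.2 g)
          + (∑ i ∈ range p.1, q ^ i) * coeff p.1 f * coeff p.2 g := by
    intro p hp
    rw [← mem_antidiagonal.mp hp, geom_sum_add]
    ring
  rw [map_add, coeff_qDeriv, coeff_mul, mul_sum, sum_congr rfl split, sum_add_distrib,
    Nat.sum_antidiagonal_succ', Nat.sum_antidiagonal_succ, coeff_mul, coeff_mul]
  simp [coeff_qDeriv, coeff_rescale, mul_assoc, mul_left_comm]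

end PowerSeries

theorem RatFunc.X_pow_ne_one {K : Type*} [Field K] {m : ℕ} (hm : m ≠ 0) :
    (RatFunc.X : RatFunc K) ^ m ≠ 1 := by
  intro h
  have hpoly : (Polynomial.X : Polynomial K) ^ m = 1 := by
    apply RatFunc.algebraMap_injective K
    simpa [map_pow, RatFunc.algebraMap_X] using h
  simpa [hm] using congrArg (Polynomial.eval 0) hpoly

theorem RatFunc.one_sub_X_ne_zero {K : Type*} [Field K] : (1 : RatFunc K) - RatFunc.X ≠ 0 :=
  sub_ne_zero.mpr fun h => RatFunc.X_pow_ne_one (K := K) one_ne_zero (by rw [pow_one, ← h])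

local notation "q" => (RatFunc.X : RatFunc ℚ)

theorem qInt_natCast (m : ℕ) : qInt m = ∑ i ∈ range m, q ^ i := by
  rw [qInt, zpow_natCast, geom_sum_eq (by simpa using RatFunc.X_pow_ne_one one_ne_zero), ← neg_sub,
    ← neg_sub q, neg_div_neg_eq]

theorem qInt_zero : qInt 0 = 0 := by simp [qInt]

theorem qInt_one : qInt 1 = 1 := by simpa using qInt_natCast 1

theorem qInt_ne_zero {m : ℕ} (hm : m ≠ 0) : qInt m ≠ 0 := by
  rw [qInt, zpow_natCast]
  exact div_ne_zero (sub_ne_zero.mpr (RatFunc.X_pow_ne_one hm).symm) RatFunc.one_sub_X_ne_zero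

theorem qInt_eq_one_add_X_mul (m : ℤ) : qInt m = 1 + q * qInt (m - 1) := by
  have hpow : q ^ m = q * q ^ (m - 1) := by
    rw [← zpow_one_add₀ RatFunc.X_ne_zero, add_sub_cancel]
  rw [qInt, qInt, hpow]
  field_simp [RatFunc.one_sub_X_ne_zero]
  ring

/-- `log_q(1 + t)`; the constant term is `(-1) / [0]_q = (-1) / 0 = 0`. -/
noncomputable def qLog : PowerSeries (RatFunc ℚ) :=
  mk fun n => (-1) ^ (n + 1) / qInt n

theorem coeff_qDeriv_qLog (n : ℕ) : coeff n (qDeriv q qLog) = (-1) ^ n := by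
  rw [coeff_qDeriv, qLog, coeff_mk, ← qInt_natCast, mul_div_cancel₀ _ (qInt_ne_zero n.succ_ne_zero)]
  ring

theorem one_add_X_mul_qDeriv_qLog : (1 + X) * qDeriv q qLog = 1 := by
  ext (_ | n)
  · rw [add_mul, one_mul, map_add, coeff_zero_X_mul, coeff_qDeriv_qLog]
    simp
  · rw [add_mul, one_mul, map_add, coeff_succ_X_mul, coeff_qDeriv_qLog, coeff_qDeriv_qLog]
    simp [pow_succ]

noncomputable def qBernoulliSndSeries : PowerSeries (RatFunc ℚ) :=
  mk qBernoulliSnd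

theorem qBernoulliSnd_succ (m : ℕ) :
    qBernoulliSnd (m + 1) =
      ∑ p ∈ antidiagonal m, (-1) ^ p.2 * qBernoulliSnd p.1 / qInt (p.2 + 2) := by
  rw [qBernoulliSnd, ← Nat.sum_antidiagonal_eq_sum_range_succ
      (fun k j => (-1) ^ (k + 1) * qBernoulliSnd j / qInt (k + 2)),
    ← Nat.sum_antidiagonal_swap, ← sum_neg_distrib]
  refine sum_congr rfl fun p _ => ?_
  simp only [Prod.fst_swap, Prod.snd_swap]
  ring

theorem qBernoulliSndSeries_mul_qLog : qBernoulliSndSeries * qLog = X := by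
  ext (_ | _ | m)
  · simp [qBernoulliSndSeries, qLog, qInt_zero]
  · simp [coeff_mul, Nat.sum_antidiagonal_succ, qBernoulliSndSeries, qLog, qInt_zero, qInt_one,
      qBernoulliSnd]
  · rw [coeff_mul, Nat.sum_antidiagonal_succ', Nat.sum_antidiagonal_succ']
    simp only [qBernoulliSndSeries, qLog, coeff_mk]
    rw [qBernoulliSnd_succ m]
    simp [qInt_one, qInt_zero, coeff_X, pow_succ, neg_div, add_assoc, one_add_one_eq_two,
      mul_div_assoc, mul_comm]

theorem rescale_qBernoulliSndSeries_mul_self :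
    rescale q qBernoulliSndSeries * qBernoulliSndSeries =
      (1 + X) * (qBernoulliSndSeries - X * qDeriv q qBernoulliSndSeries) := by
  have leibniz : rescale q qBernoulliSndSeries * qDeriv q qLog +
      qDeriv q qBernoulliSndSeries * qLog = 1 := by
    rw [← qDeriv_mul, qBernoulliSndSeries_mul_qLog, qDeriv_X]
  linear_combination (1 + X) * qBernoulliSndSeries * leibniz
    - (1 + X) * qDeriv q qBernoulliSndSeries * qBernoulliSndSeries_mul_qLog
    - rescale q qBernoulliSndSeries * qBernoulliSndSeries * one_add_X_mul_qDeriv_qLog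

theorem sub_X_mul_qDeriv_qBernoulliSndSeries :
    qBernoulliSndSeries - X * qDeriv q qBernoulliSndSeries =
      C q * mk fun n => -qInt (n - 1) * qBernoulliSnd n := by
  ext n
  rw [map_sub, coeff_X_mul_qDeriv, ← qInt_natCast, coeff_C_mul, coeff_mk, qBernoulliSndSeries,
    coeff_mk, qInt_eq_one_add_X_mul n]
  ring

theorem coeff_X_mul_mk_qInt_mul_qBernoulliSnd (n : ℕ) :
    coeff n (X * mk fun k => -qInt (k - 1) * qBernoulliSnd k) =
      -qInt (n - 2) * qBernoulliSndInt (n - 1) := by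
  cases n with
  | zero => simp [qBernoulliSndInt]
  | succ n =>
    rw [coeff_succ_X_mul, coeff_mk, qBernoulliSndInt, if_neg (by omega),
      show ((n + 1 : ℕ) : ℤ) - 2 = n - 1 by push_cast; ring,
      show ((n + 1 : ℕ) : ℤ) - 1 = n by push_cast; ring, Int.toNat_natCast]

theorem sum_qpow_mul_qBernoulliSnd (n : ℕ) :
    ∑ k ∈ Finset.range (n + 1),
        (RatFunc.X : RatFunc ℚ) ^ ((k : ℤ) - 1) * qBernoulliSnd k *
          qBernoulliSnd (n - k) =
      -qInt ((n : ℤ) - 1) * qBernoulliSnd n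
        - qInt ((n : ℤ) - 2) * qBernoulliSndInt ((n : ℤ) - 1) := by
  have series : C q⁻¹ * (rescale q qBernoulliSndSeries * qBernoulliSndSeries) =
      (1 + X) * mk fun n => -qInt (n - 1) * qBernoulliSnd n := by
    rw [rescale_qBernoulliSndSeries_mul_self, sub_X_mul_qDeriv_qBernoulliSndSeries,
      mul_left_comm (C _), ← mul_assoc (C _) (C _), ← map_mul, inv_mul_cancel₀ RatFunc.X_ne_zero,
      map_one, one_mul]
  have h := congrArg (coeff n) series
  rw [add_mul, one_mul, map_add, coeff_mk, coeff_X_mul_mk_qInt_mul_qBernoulliSnd, coeff_C_mul,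
    coeff_mul, Nat.sum_antidiagonal_eq_sum_range_succ_mk, mul_sum] at h
  rw [sub_eq_add_neg, ← neg_mul, ← h]
  refine sum_congr rfl fun k _ => ?_
  simp only [qBernoulliSndSeries, coeff_rescale, coeff_mk]
  rw [zpow_sub₀ RatFunc.X_ne_zero, zpow_one, zpow_natCast, div_eq_inv_mul]
  ring
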